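/- arXiv:2505.14953 — 3 statements merged into one kernel-verified Lean document; each statement's English description precedes it below -/
import Mathlib

section
/- Suppose the measurement channel M(A) = E_U [Σ_b ⟨b|U A U†|b⟩ · U†|b⟩⟨b|U] is invertible on Hermitian operators. Then for any observable O and density matrix ρ, E_{U,b}[tr(M^{-1}(U†|b⟩⟨b|U)·O)] = tr(ρ·O), where b is drawn with probability ⟨b|UρU†|b⟩ given U. That is, the classical shadow estimator is unbiased. -/
open Matrix
open scoped ComplexOrder

/-- Unbiasedness of the classical shadow estimator: if the measurement channel
`M(A) = E_U[Σ_b ⟨b|U A U†|b⟩ · U†|b⟩⟨b|U]` is invertible on Hermitian operators, then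
`E_{U,b}[tr(M⁻¹(U†|b⟩⟨b|U)·O)] = tr(ρ·O)`, where `U` is drawn from the ensemble and
`b` with Born probability `⟨b|UρU†|b⟩`. -/
theorem classical_shadow_unbiased
    {d : ℕ} {ι : Type} [Fintype ι]
    (μ : ι → ℝ) (hμ0 : ∀ i, 0 ≤ μ i) (hμ1 : ∑ i, μ i = 1)
    (U : ι → Matrix (Fin d) (Fin d) ℂ)
    (hU : ∀ i, U i ∈ Matrix.unitaryGroup (Fin d) ℂ)
    (Mchan Minv : Matrix (Fin d) (Fin d) ℂ →ₗ[ℂ] Matrix (Fin d) (Fin d) ℂ)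
    (hM : ∀ A, Mchan A = ∑ i, (μ i : ℂ) •
        ∑ b, ((U i) * A * (U i)ᴴ) b b • ((U i)ᴴ * Matrix.single b b 1 * (U i)))
    (hMinv : ∀ A : Matrix (Fin d) (Fin d) ℂ, A.IsHermitian → Minv (Mchan A) = A)
    (ρ O : Matrix (Fin d) (Fin d) ℂ) (hρ : ρ.PosSemidef) (hρ1 : ρ.trace = 1)
    (hO : O.IsHermitian) :
    (∑ i, (μ i : ℂ) * ∑ b, ((U i) * ρ * (U i)ᴴ) b b *
        ((Minv ((U i)ᴴ * Matrix.single b b 1 * (U i))) * O).trace)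
      = (ρ * O).trace := by
  have key : Minv (Mchan ρ) = ρ := hMinv ρ hρ.1
  conv_rhs => rw [← key, hM]
  rw [map_sum]
  simp only [_root_.map_smul, map_sum, Finset.sum_mul, trace_sum, smul_mul_assoc, trace_smul,
    smul_eq_mul, Finset.mul_sum]
end

section
/- Let X be the empirical mean of m i.i.d. random variables X_1,…,X_m, each conditioned on (U,b) having values in the spectrum of a Hermitian O with E[X_l² | U,b] = tr(U†|b⟩⟨b|U · O²). If E_{U,b}[U†|b⟩⟨b|U] = (ρ+I)/(d+1), then E_{U,b}[Var(X | U,b)] ≤ (1/(m(d+1)))·tr((ρ+I)O²) ≤ (2/(m(d+1)))·tr(O²). -/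
open Matrix
open scoped Matrix.Norms.L2Operator ComplexOrder

lemma aux_diag_re_nonneg {n : Type*} [Fintype n] [DecidableEq n]
    {M : Matrix n n ℂ} (hM : M.PosSemidef) (i : n) : 0 ≤ (M i i).re := by
  have h := hM.re_dotProduct_nonneg (Pi.single i 1)
  simpa [dotProduct, Matrix.mulVec, Pi.single_apply, Finset.sum_ite_eq] using h

lemma aux_trace_re_nonneg {n : Type*} [Fintype n] [DecidableEq n]
    {A B : Matrix n n ℂ} (hA : A.PosSemidef) (hB : B.PosSemidef) :
    0 ≤ ((A * B).trace).re := by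
  obtain ⟨C, rfl⟩ : ∃ C : Matrix n n ℂ, B = Cᴴ * C := by
    open scoped MatrixOrder in exact CStarAlgebra.nonneg_iff_eq_star_mul_self.mp hB.nonneg
  rw [← mul_assoc, Matrix.trace_mul_cycle]
  have hps : (C * A * Cᴴ).PosSemidef := hA.mul_mul_conjTranspose_same C
  rw [Matrix.trace, Complex.re_sum]
  exact Finset.sum_nonneg fun i _ => aux_diag_re_nonneg hps i

lemma aux_one_sub_psd {n : Type*} [Fintype n] [DecidableEq n]
    {ρ : Matrix n n ℂ} (hρ : ρ.PosSemidef) (hρ1 : ρ.trace = 1) :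
    ((1 : Matrix n n ℂ) - ρ).PosSemidef := by
  have hH := hρ.1
  have hspec := hH.spectral_theorem
  rw [Unitary.conjStarAlgAut_apply] at hspec
  have hUU : (hH.eigenvectorUnitary : Matrix n n ℂ) * star (hH.eigenvectorUnitary : Matrix n n ℂ) = 1 :=
    Matrix.mem_unitaryGroup_iff.mp hH.eigenvectorUnitary.2
  have hUU' : star (hH.eigenvectorUnitary : Matrix n n ℂ) * (hH.eigenvectorUnitary : Matrix n n ℂ) = 1 :=
    Matrix.mem_unitaryGroup_iff'.mp hH.eigenvectorUnitary.2
  have htr : ρ.trace = ∑ i, (hH.eigenvalues i : ℂ) := by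
    conv_lhs => rw [hspec]
    rw [Matrix.trace_mul_cycle, hUU', one_mul, Matrix.trace_diagonal]
    simp
  have hsum : ∑ i, hH.eigenvalues i = 1 := by
    have h2 : ((∑ i, hH.eigenvalues i : ℝ) : ℂ) = 1 := by
      push_cast
      rw [← htr, hρ1]
    exact_mod_cast h2
  have hle : ∀ i, (0 : ℝ) ≤ 1 - hH.eigenvalues i := by
    intro i
    have := Finset.single_le_sum (fun j _ => hρ.eigenvalues_nonneg j) (Finset.mem_univ i)
    rw [hsum] at this
    linarith
  have key : (1 : Matrix n n ℂ) - ρ =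
      (hH.eigenvectorUnitary : Matrix n n ℂ) *
        ((1 : Matrix n n ℂ) - Matrix.diagonal (RCLike.ofReal ∘ hH.eigenvalues)) *
        star (hH.eigenvectorUnitary : Matrix n n ℂ) := by
    rw [mul_sub, sub_mul, mul_one, hUU, ← hspec]
  have hdpsd : ((1 : Matrix n n ℂ) - Matrix.diagonal (RCLike.ofReal ∘ hH.eigenvalues)).PosSemidef := by
    have : (1 : Matrix n n ℂ) - Matrix.diagonal (RCLike.ofReal ∘ hH.eigenvalues)
        = Matrix.diagonal (fun i => ((1 - hH.eigenvalues i : ℝ) : ℂ)) := by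
      ext i j
      by_cases h : i = j <;>
        simp [Matrix.diagonal_apply, Matrix.one_apply, Matrix.sub_apply, h]
    rw [this]
    refine Matrix.PosSemidef.diagonal ?_
    intro i
    show (0:ℂ) ≤ ((1 - hH.eigenvalues i : ℝ) : ℂ)
    rw [Complex.zero_le_real]
    exact hle i
  rw [key]
  have := hdpsd.mul_mul_conjTranspose_same (hH.eigenvectorUnitary : Matrix n n ℂ)
  rwa [Matrix.star_eq_conjTranspose]

/-- Shot-noise variance bound for Clifford shadows: if conditionally on `(U,b)` the shots
have second moment `tr(U†|b⟩⟨b|U·O²)`, and `E_{U,b}[U†|b⟩⟨b|U] = (ρ+I)/(d+1)`, then the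
averaged conditional variance of the `m`-shot mean satisfies
`E_{U,b}[Var(X | U,b)] ≤ tr((ρ+I)O²)/(m(d+1)) ≤ 2·tr(O²)/(m(d+1))`. -/
theorem clifford_shot_variance_bound
    (d m : ℕ) (hd : 0 < d) (hm : 0 < m) {Ω : Type} [Fintype Ω]
    (μ : Ω → ℝ) (hμ0 : ∀ ω, 0 ≤ μ ω) (hμ1 : ∑ ω, μ ω = 1)
    (ρ O : Matrix (Fin d) (Fin d) ℂ)
    (hρ : ρ.PosSemidef) (hρ1 : ρ.trace = 1) (hO : O.PosSemidef)
    (hOnorm : ‖O‖ ^ 2 ≤ ((O * O).trace).re)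
    (S : Ω → Matrix (Fin d) (Fin d) ℂ) (hSpos : ∀ ω, (S ω).PosSemidef)
    (hS : ∑ ω, (μ ω : ℂ) • S ω = (1 / ((d : ℂ) + 1)) • (ρ + 1))
    (v : Ω → ℝ)                                  -- `v ω = Var(X | U,b)` at outcome `ω`
    (hv0 : ∀ ω, 0 ≤ v ω)
    (hv : ∀ ω, v ω ≤ (1 / m) * (((S ω) * (O * O)).trace).re) :
    (∑ ω, μ ω * v ω) ≤ (1 / (m * (d + 1))) * (((ρ + 1) * (O * O)).trace).re ∧
    (1 / (m * (d + 1))) * (((ρ + 1) * (O * O)).trace).re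
      ≤ (2 / (m * (d + 1))) * ((O * O).trace).re := by
  have hd1 : (0:ℝ) < (d:ℝ) + 1 := by positivity
  have hm0 : (0:ℝ) < (m:ℝ) := by exact_mod_cast hm
  have hO2psd : (O * O).PosSemidef := by
    have h := Matrix.posSemidef_conjTranspose_mul_self O
    rwa [hO.1] at h
  -- trace identity
  have h1 : ∑ ω, (μ ω : ℂ) * ((S ω * (O * O)).trace)
      = (1 / ((d:ℂ) + 1)) * (((ρ + 1) * (O * O)).trace) := by
    calc ∑ ω, (μ ω : ℂ) * ((S ω * (O * O)).trace)
        = ((∑ ω, (μ ω : ℂ) • S ω) * (O * O)).trace := by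
          rw [Finset.sum_mul, Matrix.trace_sum]
          simp [Matrix.smul_mul, Matrix.trace_smul, smul_eq_mul]
      _ = (1 / ((d:ℂ) + 1)) * (((ρ + 1) * (O * O)).trace) := by
          rw [hS, Matrix.smul_mul, Matrix.trace_smul, smul_eq_mul]
  have hkey : ∑ ω, μ ω * ((S ω * (O * O)).trace).re
      = (1 / ((d:ℝ) + 1)) * ((((ρ + 1) * (O * O)).trace).re) := by
    have h2 := congrArg Complex.re h1
    rw [Complex.re_sum] at h2
    simp only [Complex.re_ofReal_mul] at h2
    rw [h2]
    have : (1 / ((d:ℂ) + 1)) = ((1 / ((d:ℝ) + 1) : ℝ) : ℂ) := by push_cast; ring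
    rw [this, Complex.re_ofReal_mul]
  constructor
  · calc ∑ ω, μ ω * v ω
        ≤ ∑ ω, μ ω * ((1 / m) * ((S ω * (O * O)).trace).re) :=
          Finset.sum_le_sum fun ω _ => mul_le_mul_of_nonneg_left (hv ω) (hμ0 ω)
      _ = (1 / m) * ∑ ω, μ ω * ((S ω * (O * O)).trace).re := by
          rw [Finset.mul_sum]; exact Finset.sum_congr rfl fun ω _ => by ring
      _ = (1 / (m * (d + 1))) * (((ρ + 1) * (O * O)).trace).re := by
          rw [hkey]; field_simp
  · have h3 : 0 ≤ (((1 : Matrix (Fin d) (Fin d) ℂ) - ρ) * (O * O)).trace.re :=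
      aux_trace_re_nonneg (aux_one_sub_psd hρ hρ1) hO2psd
    have h4 : (((1 : Matrix (Fin d) (Fin d) ℂ) - ρ) * (O * O)).trace
        = ((O * O)).trace - (ρ * (O * O)).trace := by
      rw [Matrix.sub_mul, Matrix.one_mul, Matrix.trace_sub]
    have h5 : (((ρ + 1) * (O * O)).trace)
        = (ρ * (O * O)).trace + ((O * O)).trace := by
      rw [Matrix.add_mul, Matrix.one_mul, Matrix.trace_add]
    rw [h4] at h3
    simp only [Complex.sub_re] at h3
    rw [h5]
    simp only [Complex.add_re]
    have hpos : (0:ℝ) ≤ 1 / ((m:ℝ) * ((d:ℝ) + 1)) := by positivity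
    have h6 : (ρ * (O * O)).trace.re + ((O * O)).trace.re ≤ 2 * ((O * O)).trace.re := by
      linarith
    calc (1 / ((m:ℝ) * ((d:ℝ) + 1))) * ((ρ * (O * O)).trace.re + ((O * O)).trace.re)
        ≤ (1 / ((m:ℝ) * ((d:ℝ) + 1))) * (2 * ((O * O)).trace.re) :=
          mul_le_mul_of_nonneg_left h6 hpos
      _ = (2 / ((m:ℝ) * ((d:ℝ) + 1))) * ((O * O)).trace.re := by ring
end

section
/- With b ∈ {0,1}^n, independent bits e_l with P(e_l=1)=1/3, c = b ⊕ e, and single-qubit unitaries U_l, the second-moment identity holds: 9^n · E_e[tr(⊗_l U_l†|c_l⟩⟨c_l|U_l · O²)] = 9^n · tr(D_{1/3}^{⊗n}(U†|b⟩⟨b|U) · O²), where U = ⊗_l U_l and D_{1/3} is the single-qubit depolarizing map. -/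
open Matrix

/-- The rank-one projector `|b⟩⟨b|` onto the computational basis state `b` of `ℂ²`. -/
def ketbra (b : Fin 2) : Matrix (Fin 2) (Fin 2) ℂ := Matrix.single b b 1

/-- The tensor product `⊗_l A_l` of single-qubit matrices, as a matrix indexed by
`ι → Fin 2`. -/
def tens {ι : Type} [Fintype ι] (A : ι → Matrix (Fin 2) (Fin 2) ℂ) :
    Matrix (ι → Fin 2) (ι → Fin 2) ℂ :=
  Matrix.of fun x y => ∏ l, A l (x l) (y l)

/-- The single-qubit depolarizing map `D_p(A) = p·A + (1-p)·(tr A / 2)·I`. -/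
noncomputable def dep2 (p : ℝ) (A : Matrix (Fin 2) (Fin 2) ℂ) : Matrix (Fin 2) (Fin 2) ℂ :=
  (p : ℂ) • A + ((1 - (p : ℂ)) * (A.trace / 2)) • (1 : Matrix (Fin 2) (Fin 2) ℂ)

lemma tens_sum {n : ℕ} (f : Fin n → Bool → Matrix (Fin 2) (Fin 2) ℂ) (w : Bool → ℂ) :
    ∑ e : Fin n → Bool, (∏ l, w (e l)) • tens (fun l => f l (e l))
      = tens (fun l => ∑ t, w t • f l t) := by
  ext x y
  simp only [Matrix.sum_apply, Matrix.smul_apply, tens, Matrix.of_apply, smul_eq_mul]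
  rw [Finset.prod_univ_sum]
  rw [Fintype.piFinset_univ]
  exact Finset.sum_congr rfl fun e _ => (Finset.prod_mul_distrib).symm

lemma ketbra_add (b : Fin 2) : ketbra b + ketbra (b + 1) = 1 := by
  fin_cases b <;> · ext i j; fin_cases i <;> fin_cases j <;>
    simp [ketbra, Matrix.single, Matrix.one_apply]

lemma dep_eq (b : Fin 2) (V : Matrix (Fin 2) (Fin 2) ℂ)
    (hV : V ∈ Matrix.unitaryGroup (Fin 2) ℂ) :
    (∑ t : Bool, (if t then (1/3 : ℂ) else 2/3) • (Vᴴ * ketbra (if t then b + 1 else b) * V))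
      = dep2 (1/3) (Vᴴ * ketbra b * V) := by
  have hVu : Vᴴ * V = 1 := Matrix.UnitaryGroup.star_mul_self ⟨V, hV⟩
  have hVu' : V * Vᴴ = 1 := by simpa [Matrix.star_eq_conjTranspose] using Matrix.mem_unitaryGroup_iff.mp hV
  have htr : (Vᴴ * ketbra b * V).trace = 1 := by
    rw [Matrix.trace_mul_cycle, hVu', Matrix.one_mul]
    fin_cases b <;> simp [ketbra, Matrix.trace, Matrix.single]
  have key : Vᴴ * ketbra (b + 1) * V = 1 - Vᴴ * ketbra b * V := by
    have := ketbra_add b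
    have : Vᴴ * (ketbra b + ketbra (b + 1)) * V = 1 := by rw [this]; simp [hVu]
    rw [Matrix.mul_add, Matrix.add_mul] at this
    linear_combination (norm := module) this
  rw [dep2, htr]
  simp only [Fintype.sum_bool, if_true, if_false]
  rw [key]
  push_cast
  module

/-- Second-moment identity for Pauli QCQC: averaging over the bit flips,
`9ⁿ · E_e[tr(⊗_l U_l†|c_l⟩⟨c_l|U_l · O²)] = 9ⁿ · tr(D_{1/3}^{⊗n}(U†|b⟩⟨b|U) · O²)`,
where `U = ⊗_l U_l` so that `D_{1/3}^{⊗n}(U†|b⟩⟨b|U) = ⊗_l D_{1/3}(U_l†|b_l⟩⟨b_l|U_l)`. -/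
theorem pauli_second_moment_identity
    (n : ℕ) (b : Fin n → Fin 2)
    (U : Fin n → Matrix (Fin 2) (Fin 2) ℂ)
    (hU : ∀ l, U l ∈ Matrix.unitaryGroup (Fin 2) ℂ)
    (O : Matrix (Fin n → Fin 2) (Fin n → Fin 2) ℂ) (hO : O.IsHermitian) :
    (9 : ℂ) ^ n * (∑ e : Fin n → Bool,
        (∏ l, (if e l then (1/3 : ℂ) else 2/3)) *
          ((tens (fun l => (U l)ᴴ * ketbra (if e l then b l + 1 else b l) * (U l))
            * (O * O)).trace))
      = (9 : ℂ) ^ n *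
          ((tens (fun l => dep2 (1/3) ((U l)ᴴ * ketbra (b l) * (U l))) * (O * O)).trace) := by
  congr 1
  have : (∑ e : Fin n → Bool, (∏ l, (if e l then (1/3 : ℂ) else 2/3)) •
      tens (fun l => (U l)ᴴ * ketbra (if e l then b l + 1 else b l) * (U l)))
      = tens (fun l => dep2 (1/3) ((U l)ᴴ * ketbra (b l) * (U l))) := by
    rw [tens_sum (fun l t => (U l)ᴴ * ketbra (if t then b l + 1 else b l) * (U l))
      (fun t => if t then (1/3 : ℂ) else 2/3)]
    exact congrArg tens (funext fun l => dep_eq (b l) (U l) (hU l))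
  rw [← this, Matrix.sum_mul, Matrix.trace_sum]
  exact Finset.sum_congr rfl fun e _ => by rw [Matrix.smul_mul, Matrix.trace_smul, smul_eq_mul]
end
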